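/- arXiv:math/0405379 — 3 statements merged into one kernel-verified Lean document; each statement's English description precedes it below -/
import Mathlib

section
/- Branching rule for twisted representations of gl(k) (character form): let k ≥ 2 and let λ be a strict partition with k parts. Then s_{λ−δ_k}(x_1,…,x_{k−1},1)·s_{δ_k}(x_1,…,x_{k−1},1) = Σ_ν 2^{∇(λ,ν)} · s_{ν−δ_{k−1}}(x_1,…,x_{k−1})·s_{δ_{k−1}}(x_1,…,x_{k−1}), where the sum is over strict partitions ν with k−1 parts such that ν interlaces λ. -/
open MvPolynomial

/-- The alternant `det(x_i^{μ_j})_{i,j} = Σ_ω sgn(ω) Π_j x_{ω(j)}^{μ_j}`. -/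
noncomputable def alt (k : ℕ) (μ : Fin k → ℕ) : MvPolynomial (Fin k) ℤ :=
  ∑ ω : Equiv.Perm (Fin k), (Equiv.Perm.sign ω : ℤ) • ∏ j : Fin k, (X (ω j)) ^ (μ j)

/-- `p` is the Schur polynomial `s_λ(x_1, …, x_k)`, characterized by
`p · det(x_i^{k-j}) = det(x_i^{λ_j + k - j})`. -/
def IsSchur (k : ℕ) (lam : Fin k → ℕ) (p : MvPolynomial (Fin k) ℤ) : Prop :=
  p * alt k (fun i => k - 1 - (i : ℕ)) = alt k (fun j => lam j + (k - 1 - (j : ℕ)))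

/-!
Multiplying by the Vandermonde determinant `det(x_i^{k-1-j})` turns each Schur polynomial into
an alternant `det(x_i^{μ_j})`. Setting `x_k = 1` and subtracting adjacent columns reduces the
alternant of `λ` to the `(k-1) × (k-1)` determinant of `x_i^{λ_j} - x_i^{λ_{j+1}}`. After
multiplying row `i` by `(x_i + 1)/(x_i - 1)`, each entry becomes
`(x + 1)(x^{λ_j} - x^{λ_{j+1}})/(x - 1) = Σ_{λ_{j+1} ≤ t ≤ λ_j} c_t x^t`, with `c_t = 2` in the
interior and `1` at the endpoints. Expanding multilinearly gives `Σ_ν 2^{∇(λ,ν)} det(x_i^{ν_j})`,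
where only strictly decreasing interlacing `ν` survive. The same reduction applied to `δ_k` and
`2δ_k` gives `s_{δ_k}(x, 1) = s_{δ_{k-1}}(x) ∏ (x_i + 1)`, and this product is exactly the extra
factor above.
-/

open Matrix Finset

section Alternant

variable {R : Type*} [CommRing R] {m : ℕ}

def alternant (v : Fin m → R) (e : Fin m → ℕ) : R :=
  (of fun i j => v i ^ e j).det

theorem alternant_eq_zero_of_not_injective (v : Fin m → R) {e : Fin m → ℕ}
    (he : ¬ Function.Injective e) : alternant v e = 0 := by
  obtain ⟨a, b, hab, hne⟩ : ∃ a b, e a = e b ∧ a ≠ b := by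
    simpa [Function.Injective] using he
  exact det_zero_of_column_eq hne fun i => by simp [hab]

theorem alternant_rev_ne_zero [IsDomain R] {v : Fin m → R} (hv : Function.Injective v) :
    alternant v (fun j => m - 1 - j) ≠ 0 := by
  have h : (of fun i j : Fin m => v i ^ (m - 1 - (j : ℕ))) =
      (vandermonde v).submatrix id Fin.revPerm := by
    ext i j
    simp only [of_apply, submatrix_apply, id, vandermonde_apply, Fin.revPerm_apply, Fin.val_rev]
    congr 1
    omega
  rw [alternant, h, det_permute']
  refine mul_ne_zero ?_ (det_vandermonde_ne_zero_iff.mpr hv)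
  rcases Int.units_eq_one_or (Equiv.Perm.sign (Fin.revPerm : Equiv.Perm (Fin m))) with h | h <;>
    simp [h]

theorem det_sum_mul_pow (v : Fin m → R) (I : Fin m → Finset ℕ) (c : Fin m → ℕ → R) :
    (of fun i j => ∑ t ∈ I j, c j t * v i ^ t).det =
      ∑ ν ∈ Fintype.piFinset I, (∏ j, c j (ν j)) * alternant v ν := by
  have h : (of fun i j => ∑ t ∈ I j, c j t * v i ^ t)ᵀ =
      fun j => ∑ t ∈ I j, c j t • fun i => v i ^ t := by
    ext j i
    simp
  rw [← det_transpose, h]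
  change detRowAlternating _ = _
  rw [← AlternatingMap.coe_multilinearMap, MultilinearMap.map_sum_finset]
  refine sum_congr rfl fun ν _ => ?_
  rw [AlternatingMap.coe_multilinearMap, AlternatingMap.map_smul_univ, smul_eq_mul, alternant,
    ← det_transpose]
  rfl

theorem alternant_snoc_one (v : Fin m → R) (e : Fin (m + 1) → ℕ) :
    alternant (Fin.snoc v 1) e =
      (of fun i j : Fin m => v i ^ e j.castSucc - v i ^ e j.succ).det := by
  set y : Fin (m + 1) → R := Fin.snoc v 1
  set B : Matrix (Fin (m + 1)) (Fin (m + 1)) R := of fun i j =>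
    Fin.cases (y i ^ e 0) (fun j => y i ^ e j.succ - y i ^ e j.castSucc) j
  have hB : alternant y e = B.det :=
    det_eq_of_forall_col_eq_smul_add_pred (fun _ => 1) (fun i => by simp [B])
      (fun i j => by simp [B])
  rw [hB, det_succ_row B (Fin.last m), Fin.sum_univ_succ,
    Finset.sum_eq_zero (fun j _ => by simp [B, y]), add_zero]
  have : (of fun i j : Fin m => v i ^ e j.castSucc - v i ^ e j.succ) =
      -(B.submatrix (Fin.last m).succAbove (Fin.succAbove 0)) := by
    ext i j
    simp [B, y]
  rw [this, det_neg]
  simp [B, y]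

theorem alternant_snoc_one_of_step (v : Fin m → R) {e : Fin (m + 1) → ℕ} {f : Fin m → ℕ}
    {d : ℕ} (h : ∀ j, e j.castSucc = f j + d ∧ e j.succ = f j) :
    alternant (Fin.snoc v 1) e = (∏ i, (v i ^ d - 1)) * alternant v f := by
  rw [alternant_snoc_one, alternant, ← det_mul_column]
  congr 1
  ext i j
  simp only [of_apply, (h j).1, (h j).2]
  ring

theorem alternant_snoc_one_rev (v : Fin m → R) :
    alternant (Fin.snoc v 1) (fun j : Fin (m + 1) => m + 1 - 1 - j) =
      (∏ i, (v i - 1)) * alternant v (fun j => m - 1 - j) := by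
  simpa using alternant_snoc_one_of_step v (d := 1) fun j => by simp; omega

def twistedGeomSum (x : R) (b a : ℕ) : R :=
  ∑ t ∈ Icc b a, (if b < t ∧ t < a then 2 else 1) * x ^ t

theorem twistedGeomSum_eq_sum_Ico_add_sum_Ioc {x : R} {b a : ℕ} (h : b < a) :
    twistedGeomSum x b a = ∑ t ∈ Ico b a, x ^ t + ∑ t ∈ Ioc b a, x ^ t := by
  have hIco : Ico b a = (Icc b a).filter (· < a) := by ext; simp; omega
  have hIoc : Ioc b a = (Icc b a).filter (b < ·) := by ext; simp; omega
  rw [twistedGeomSum, hIco, hIoc, sum_filter, sum_filter, ← sum_add_distrib]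
  refine sum_congr rfl fun t ht => ?_
  rw [mem_Icc] at ht
  split_ifs <;> first | omega | ring

theorem twistedGeomSum_mul_sub_one {x : R} {b a : ℕ} (h : b < a) :
    twistedGeomSum x b a * (x - 1) = (x + 1) * (x ^ a - x ^ b) := by
  rw [twistedGeomSum_eq_sum_Ico_add_sum_Ioc h, add_mul, geom_sum_Ico_mul x h.le,
    ← Ico_add_one_add_one_eq_Ioc, geom_sum_Ico_mul x (by omega : b + 1 ≤ a + 1)]
  ring

def strictInterlacing (lam : Fin (m + 1) → ℕ) : Finset (Fin m → ℕ) :=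
  (Fintype.piFinset fun i => Icc (lam i.succ) (lam i.castSucc)).filter
    fun ν => ∀ i j, i < j → ν j < ν i

theorem mem_strictInterlacing {lam : Fin (m + 1) → ℕ} {ν : Fin m → ℕ} :
    ν ∈ strictInterlacing lam ↔
      StrictAnti ν ∧ ∀ i, lam i.succ ≤ ν i ∧ ν i ≤ lam i.castSucc := by
  simp only [strictInterlacing, mem_filter, Fintype.mem_piFinset, mem_Icc, StrictAnti]
  exact and_comm

def nabla (lam : Fin (m + 1) → ℕ) (ν : Fin m → ℕ) : ℕ :=
  (univ.filter fun i => lam i.succ < ν i ∧ ν i < lam i.castSucc).card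

theorem antitone_of_interlace {lam : Fin (m + 1) → ℕ} {ν : Fin m → ℕ}
    (h : ∀ i, lam i.succ ≤ ν i ∧ ν i ≤ lam i.castSucc) : Antitone ν := by
  cases m with
  | zero => exact fun i => i.elim0
  | succ k =>
    refine Fin.antitone_iff_succ_le.mpr fun i => (h i.succ).2.trans ?_
    rw [← Fin.succ_castSucc]
    exact (h i.castSucc).1

theorem det_twistedGeomSum (v : Fin m → R) (lam : Fin (m + 1) → ℕ) :
    (of fun i j : Fin m => twistedGeomSum (v i) (lam j.succ) (lam j.castSucc)).det =
      ∑ ν ∈ strictInterlacing lam, 2 ^ nabla lam ν * alternant v ν := by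
  rw [show (of fun i j : Fin m => twistedGeomSum (v i) (lam j.succ) (lam j.castSucc)) =
      of fun i j => ∑ t ∈ Icc (lam j.succ) (lam j.castSucc),
        (if lam j.succ < t ∧ t < lam j.castSucc then (2 : R) else 1) * v i ^ t from rfl,
    det_sum_mul_pow, strictInterlacing, sum_filter]
  refine sum_congr rfl fun ν hν => ?_
  have hbox : ∀ i, lam i.succ ≤ ν i ∧ ν i ≤ lam i.castSucc := by
    simpa only [Fintype.mem_piFinset, mem_Icc] using hν
  split_ifs with hstrict
  · rw [prod_ite, prod_const, prod_const_one, mul_one, nabla]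
  · rw [alternant_eq_zero_of_not_injective v fun hinj =>
      hstrict ((antitone_of_interlace hbox).strictAnti_of_injective hinj), mul_zero]

theorem alternant_snoc_one_mul_prod_add_one (v : Fin m → R) {lam : Fin (m + 1) → ℕ}
    (hlam : StrictAnti lam) :
    alternant (Fin.snoc v 1) lam * ∏ i, (v i + 1) =
      (∑ ν ∈ strictInterlacing lam, 2 ^ nabla lam ν * alternant v ν) * ∏ i, (v i - 1) := by
  rw [← det_twistedGeomSum, alternant_snoc_one, mul_comm, ← det_mul_column, mul_comm,
    ← det_mul_column]
  congr 1
  ext i j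
  simp only [of_apply]
  rw [mul_comm (v i - 1), twistedGeomSum_mul_sub_one (hlam (Fin.castSucc_lt_succ (i := j)))]

end Alternant

section StrictAnti

variable {m : ℕ} {f : Fin m → ℕ}

theorem StrictAnti.apply_add_sub_le (hf : StrictAnti f) {i j : Fin m} (hij : i ≤ j) :
    f j + (j - i : ℕ) ≤ f i := by
  rw [Fin.le_def] at hij
  induction h : (j - i : ℕ) generalizing j with
  | zero =>
    obtain rfl : j = i := Fin.ext (by omega)
    simp
  | succ d ih =>
    have hj : (j : ℕ) - 1 < m := by omega
    have h1 := ih (j := ⟨j - 1, hj⟩) (by simp only; omega) (by simp only; omega)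
    have h2 := hf (Fin.lt_def.mpr (by simp only; omega) : (⟨j - 1, hj⟩ : Fin m) < j)
    omega

theorem StrictAnti.sub_le_apply (hf : StrictAnti f) (j : Fin m) : m - 1 - j ≤ f j := by
  have hj := j.isLt
  have := hf.apply_add_sub_le (i := j) (j := ⟨m - 1, by omega⟩)
    (Fin.le_def.mpr (by simp only; omega))
  simp only at this
  omega

theorem StrictAnti.antitone_sub (hf : StrictAnti f) :
    Antitone fun j : Fin m => f j - (m - 1 - j) := by
  intro i j hij
  have := hf.apply_add_sub_le hij
  have := hf.sub_le_apply j
  rw [Fin.le_def] at hij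
  simp only
  omega

end StrictAnti

theorem finsum_subtype_eq_sum {α M : Type*} [AddCommMonoid M] {p : α → Prop} {t : Finset α}
    (h : ∀ a, a ∈ t ↔ p a) (f : α → M) : ∑ᶠ a : Subtype p, f a = ∑ a ∈ t, f a := by
  rw [finsum_subtype_eq_finsum_cond, finsum_cond_eq_sum_of_cond_iff f fun _ => (h _).symm]

theorem alt_eq_alternant (k : ℕ) (μ : Fin k → ℕ) : alt k μ = alternant X μ := by
  rw [alternant, det_apply]
  refine sum_congr rfl fun σ _ => ?_
  simp [Units.smul_def]

section Evaluation

-- An explicit `Algebra ℤ S`, so that the lemmas also apply to `MvPolynomial.algebra`.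
variable {S : Type*} [CommRing S] [Algebra ℤ S] {k : ℕ} {p : MvPolynomial (Fin k) ℤ}

theorem aeval_alt (v : Fin k → S) (μ : Fin k → ℕ) : aeval v (alt k μ) = alternant v μ := by
  rw [alt_eq_alternant, alternant, AlgHom.map_det]
  congr 1
  ext i j
  simp

theorem IsSchur.aeval_mul_alternant {μ : Fin k → ℕ} (h : IsSchur k μ p) (v : Fin k → S) :
    aeval v p * alternant v (fun j => k - 1 - j) = alternant v (fun j => μ j + (k - 1 - j)) := by
  rw [← aeval_alt, ← aeval_alt, ← map_mul, h]

theorem IsSchur.aeval_mul_alternant_of_sub {ν : Fin k → ℕ} (hν : StrictAnti ν)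
    (h : IsSchur k (fun j => ν j - (k - 1 - j)) p) (v : Fin k → S) :
    aeval v p * alternant v (fun j => k - 1 - j) = alternant v ν := by
  rw [h.aeval_mul_alternant]
  congr 1
  ext j
  have := hν.sub_le_apply j
  omega

end Evaluation

section Branching

variable {S : Type*} [CommRing S] [Algebra ℤ S] [IsDomain S] {n : ℕ} {v : Fin n → S}

theorem aeval_snoc_one_of_isSchur_rev (hv : Function.Injective v) (hv1 : ∀ i, v i ≠ 1)
    {q : MvPolynomial (Fin (n + 1)) ℤ} {s : MvPolynomial (Fin n) ℤ}
    (hq : IsSchur (n + 1) (fun i => n - i) q) (hs : IsSchur n (fun i => n - 1 - i) s) :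
    aeval (Fin.snoc v 1) q = aeval v s * ∏ i, (v i + 1) := by
  have hsq : ∏ i, (v i ^ 2 - 1) = (∏ i, (v i - 1)) * ∏ i, (v i + 1) := by
    rw [← prod_mul_distrib]
    exact prod_congr rfl fun i _ => by ring
  have h := hq.aeval_mul_alternant (Fin.snoc v 1)
  rw [alternant_snoc_one_rev, alternant_snoc_one_of_step v (d := 2)
    (f := fun j => (n - 1 - j) + (n - 1 - j)) fun j => by simp; omega,
    ← hs.aeval_mul_alternant v, hsq] at h
  apply mul_right_cancel₀ (mul_ne_zero (prod_ne_zero_iff.mpr fun i _ => sub_ne_zero.mpr (hv1 i))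
    (alternant_rev_ne_zero hv))
  linear_combination h

theorem aeval_snoc_one_mul_alternant_rev (hv1 : ∀ i, v i ≠ 1) {lam : Fin (n + 1) → ℕ}
    (hlam : StrictAnti lam) {p : MvPolynomial (Fin (n + 1)) ℤ}
    (hp : IsSchur (n + 1) (fun i => lam i - (n - i)) p) :
    aeval (Fin.snoc v 1) p * alternant v (fun j => n - 1 - j) * ∏ i, (v i + 1) =
      ∑ ν ∈ strictInterlacing lam, 2 ^ nabla lam ν * alternant v ν := by
  apply mul_right_cancel₀ (prod_ne_zero_iff.mpr fun i _ => sub_ne_zero.mpr (hv1 i))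
  rw [← alternant_snoc_one_mul_prod_add_one v hlam, ← hp.aeval_mul_alternant_of_sub hlam,
    alternant_snoc_one_rev]
  ring

end Branching

theorem twisted_branching_rule_general (n : ℕ) (lam : Fin (n + 1) → ℕ)
    (hstrict : ∀ i j : Fin (n + 1), i < j → lam j < lam i)
    (p q : MvPolynomial (Fin (n + 1)) ℤ)
    (hp : IsSchur (n + 1) (fun i => lam i - (n - (i : ℕ))) p)
    (hq : IsSchur (n + 1) (fun i => n - (i : ℕ)) q)
    (s : (Fin n → ℕ) → MvPolynomial (Fin n) ℤ)
    (hs : ∀ μ : Fin n → ℕ, (∀ i j : Fin n, i ≤ j → μ j ≤ μ i) → IsSchur n μ (s μ)) :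
    MvPolynomial.aeval
        (fun j : Fin (n + 1) =>
          if h : (j : ℕ) < n then (X ⟨(j : ℕ), h⟩ : MvPolynomial (Fin n) ℤ) else 1)
        (p * q) =
      ∑ᶠ ν : {ν : Fin n → ℕ //
          (∀ i j : Fin n, i < j → ν j < ν i) ∧
          ∀ i : Fin n, lam i.succ ≤ ν i ∧ ν i ≤ lam i.castSucc},
        ((2 : ℤ) ^ (Finset.univ.filter
            (fun i : Fin n => lam i.succ < ν.1 i ∧ ν.1 i < lam i.castSucc)).card) •
          (s (fun i => ν.1 i - (n - 1 - (i : ℕ))) * s (fun i => n - 1 - (i : ℕ))) := by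
  have hX1 : ∀ i : Fin n, (X i : MvPolynomial (Fin n) ℤ) ≠ 1 := fun i h => by
    simpa using congrArg (eval 0) h
  have hδ : Antitone fun i : Fin n => n - 1 - (i : ℕ) := fun i j hij => by
    rw [Fin.le_def] at hij; dsimp only; omega
  have hsδ := hs _ hδ
  change aeval (Fin.snoc X 1) (p * q) = _
  rw [map_mul, aeval_snoc_one_of_isSchur_rev X_injective hX1 hq hsδ, aeval_X_left_apply]
  refine Eq.trans ?_ (finsum_subtype_eq_sum (fun _ => mem_strictInterlacing) fun ν =>
    (2 : ℤ) ^ nabla lam ν • (s (fun i => ν i - (n - 1 - i)) * s fun i => n - 1 - i)).symm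
  apply mul_right_cancel₀ (alternant_rev_ne_zero (X_injective (σ := Fin n) (R := ℤ)))
  have hschur : ∀ ν ∈ strictInterlacing lam, s (fun i => ν i - (n - 1 - i)) *
      alternant X (fun j => n - 1 - j) = alternant X ν := fun ν hν => by
    have hanti := (mem_strictInterlacing.mp hν).1
    simpa using (hs _ hanti.antitone_sub).aeval_mul_alternant_of_sub hanti
      (X : Fin n → MvPolynomial (Fin n) ℤ)
  calc _ = aeval (Fin.snoc X 1) p * alternant X (fun j => n - 1 - j) * (∏ i, (X i + 1)) *
        s fun i => n - 1 - i := by ring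
    _ = _ := by
      rw [aeval_snoc_one_mul_alternant_rev hX1 hstrict hp, sum_mul, sum_mul]
      refine sum_congr rfl fun ν hν => ?_
      rw [nabla, ← hschur ν hν, zsmul_eq_mul]
      push_cast
      ring

/-- Branching rule for twisted representations of `gl(k)` (character form), with
`k = n + 1 ≥ 2`: setting `x_k = 1` in `s_{λ-δ_k} · s_{δ_k}` gives
`Σ_ν 2^{∇(λ,ν)} s_{ν-δ_{k-1}} · s_{δ_{k-1}}`, the sum over strict partitions `ν`
with `k-1` parts interlacing `λ`; here `∇(λ,ν) = #{i : λ_i > ν_i > λ_{i+1}}`. -/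
theorem twisted_branching_rule (n : ℕ) (hn : 1 ≤ n) (lam : Fin (n + 1) → ℕ)
    (hstrict : ∀ i j : Fin (n + 1), i < j → lam j < lam i)
    (p q : MvPolynomial (Fin (n + 1)) ℤ)
    (hp : IsSchur (n + 1) (fun i => lam i - (n - (i : ℕ))) p)
    (hq : IsSchur (n + 1) (fun i => n - (i : ℕ)) q)
    (s : (Fin n → ℕ) → MvPolynomial (Fin n) ℤ)
    (hs : ∀ μ : Fin n → ℕ, (∀ i j : Fin n, i ≤ j → μ j ≤ μ i) → IsSchur n μ (s μ)) :
    MvPolynomial.aeval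
        (fun j : Fin (n + 1) =>
          if h : (j : ℕ) < n then (X ⟨(j : ℕ), h⟩ : MvPolynomial (Fin n) ℤ) else 1)
        (p * q) =
      ∑ᶠ ν : {ν : Fin n → ℕ //
          (∀ i j : Fin n, i < j → ν j < ν i) ∧
          ∀ i : Fin n, lam i.succ ≤ ν i ∧ ν i ≤ lam i.castSucc},
        ((2 : ℤ) ^ (Finset.univ.filter
            (fun i : Fin n => lam i.succ < ν.1 i ∧ ν.1 i < lam i.castSucc)).card) •
          (s (fun i => ν.1 i - (n - 1 - (i : ℕ))) * s (fun i => n - 1 - (i : ℕ))) :=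
  twisted_branching_rule_general n lam hstrict p q hp hq s hs
end

section
/- Combinatorial multiplicity count in the twisted branching rule: let k ≥ 2, let λ be a strict partition with k parts and ν a strict partition with k−1 parts. Then the number of partitions μ = (μ_1 ≥ … ≥ μ_{k−1} ≥ 0) such that μ ◁ λ−δ_k and μ_i ≤ (ν−δ_{k−1})_i ≤ μ_i + 1 for all 1 ≤ i ≤ k−1 (i.e., the skew shape (ν−δ_{k−1})/μ is a vertical strip) equals 2^{∇(λ,ν)} if ν ◁ λ, and equals 0 otherwise. -/
/-!
Write `κ = λ - δ_k` and `ρ = ν - δ_{k-1}`. The interlacing bounds `κ_{i+1} ≤ μ_i ≤ κ_i` already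
force `μ` to be a partition, so the admissible `μ` form a box: `μ_i` ranges independently over
`[max κ_{i+1} (ρ_i - 1), min κ_i ρ_i]`. Strictness of `λ` and `ν` keeps the truncated
subtractions honest, and then the `i`-th interval has two points when `λ_{i+1} < ν_i < λ_i`,
one point when `ν_i` equals `λ_{i+1}` or `λ_i`, and none otherwise.
-/

open Finset

/-- The componentwise difference `f - δ_m`, where `δ_m = (m - 1, …, 1, 0)`. -/
def subStaircase {m : ℕ} (f : Fin m → ℕ) (i : Fin m) : ℕ := f i - (m - 1 - i)

/-- `μ ◁ κ`. -/
def Interlaces {α : Type*} [Preorder α] {n : ℕ} (μ : Fin n → α) (κ : Fin (n + 1) → α) : Prop :=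
  ∀ i, κ i.succ ≤ μ i ∧ μ i ≤ κ i.castSucc

def IsVerticalStrip {n : ℕ} (μ ρ : Fin n → ℕ) : Prop :=
  ∀ i, μ i ≤ ρ i ∧ ρ i ≤ μ i + 1

/-- The values `f j`, `j ≥ i`, are `m - i` distinct naturals bounded by `f i`. -/
theorem sub_one_sub_le_of_strictAnti {m : ℕ} {f : Fin m → ℕ} (hf : StrictAnti f) (i : Fin m) :
    m - 1 - i ≤ f i := by
  have hcard : #(Ici i) ≤ #(range (f i + 1)) :=
    card_le_card_of_injOn f
      (fun j hj => by simpa [Nat.lt_succ_iff] using hf.antitone (mem_Ici.1 hj))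
      hf.injective.injOn
  simp only [Fin.card_Ici, card_range] at hcard
  omega

theorem Interlaces.antitone_right {α : Type*} [Preorder α] {n : ℕ} {μ : Fin n → α}
    {κ : Fin (n + 1) → α} (h : Interlaces μ κ) : Antitone κ :=
  Fin.antitone_iff_succ_le.2 fun i => (h i).1.trans (h i).2

theorem Interlaces.antitone {α : Type*} [Preorder α] {n : ℕ} {μ : Fin n → α}
    {κ : Fin (n + 1) → α} (h : Interlaces μ κ) : Antitone μ := by
  intro i j hij
  rcases hij.lt_or_eq with hlt | rfl
  · calc μ j ≤ κ j.castSucc := (h j).2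
      _ ≤ κ i.succ := h.antitone_right (Fin.succ_le_castSucc_iff.2 hlt)
      _ ≤ μ i := (h i).1
  · exact le_rfl

theorem interlaces_and_isVerticalStrip_iff {n : ℕ} (μ : Fin n → ℕ) (κ : Fin (n + 1) → ℕ)
    (ρ : Fin n → ℕ) :
    Interlaces μ κ ∧ IsVerticalStrip μ ρ ↔
      ∀ i, μ i ∈ Icc (max (κ i.succ) (ρ i - 1)) (min (κ i.castSucc) (ρ i)) := by
  simp only [Interlaces, IsVerticalStrip, mem_Icc, max_le_iff, le_min_iff, ← forall_and]
  exact forall_congr' fun i => by omega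

theorem antitone_and_interlaces_and_isVerticalStrip_iff {n : ℕ} (μ : Fin n → ℕ)
    (κ : Fin (n + 1) → ℕ) (ρ : Fin n → ℕ) :
    Antitone μ ∧ Interlaces μ κ ∧ IsVerticalStrip μ ρ ↔
      μ ∈ Fintype.piFinset fun i => Icc (max (κ i.succ) (ρ i - 1)) (min (κ i.castSucc) (ρ i)) := by
  rw [Fintype.mem_piFinset, ← interlaces_and_isVerticalStrip_iff]
  exact ⟨And.right, fun h => ⟨h.1.antitone, h⟩⟩

theorem card_Icc_sub_window (a b c p : ℕ) (hab : a < b) (ha : p ≤ a) (hc : p ≤ c) :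
    #(Icc (max (a - p) (c - p - 1)) (min (b - (p + 1)) (c - p))) =
      if a ≤ c ∧ c ≤ b then (if a < c ∧ c < b then 2 else 1) else 0 := by
  rw [Nat.card_Icc]
  split_ifs <;> omega

theorem Fintype.prod_ite_ite_zero_one {ι M : Type*} [Fintype ι] [CommMonoidWithZero M]
    (p q : ι → Prop) [DecidablePred p] [Decidable (∀ i, p i)] [DecidablePred q] (a : M) :
    ∏ i, (if p i then (if q i then a else 1) else 0) = if ∀ i, p i then a ^ #{i | q i} else 0 := by
  simp only [Fintype.prod_ite_zero, ← prod_filter, prod_const]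

theorem card_Icc_subStaircase_window {n : ℕ} {lam : Fin (n + 1) → ℕ} {ν : Fin n → ℕ}
    (hlam : StrictAnti lam) (hν : StrictAnti ν) (i : Fin n) :
    #(Icc (max (subStaircase lam i.succ) (subStaircase ν i - 1))
        (min (subStaircase lam i.castSucc) (subStaircase ν i))) =
      if lam i.succ ≤ ν i ∧ ν i ≤ lam i.castSucc then
        (if lam i.succ < ν i ∧ ν i < lam i.castSucc then 2 else 1) else 0 := by
  have hκ_succ : subStaircase lam i.succ = lam i.succ - (n - 1 - i) := by
    simp only [subStaircase, Fin.val_succ]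
    congr 1
    omega
  have hκ_castSucc : subStaircase lam i.castSucc = lam i.castSucc - (n - 1 - i + 1) := by
    simp only [subStaircase, Fin.val_castSucc]
    congr 1
    omega
  have hlam_ge : n - 1 - i ≤ lam i.succ := by
    have := sub_one_sub_le_of_strictAnti hlam i.succ
    simp only [Fin.val_succ] at this
    omega
  rw [hκ_succ, hκ_castSucc, subStaircase, card_Icc_sub_window _ _ _ _
    (hlam i.castSucc_lt_succ) hlam_ge (sub_one_sub_le_of_strictAnti hν i)]

theorem twisted_branching_multiplicity_count_general (n : ℕ)
    (lam : Fin (n + 1) → ℕ)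
    (hlam : ∀ i j : Fin (n + 1), i < j → lam j < lam i)
    (ν : Fin n → ℕ) (hν : ∀ i j : Fin n, i < j → ν j < ν i) :
    Nat.card {μ : Fin n → ℕ //
        (∀ i j : Fin n, i ≤ j → μ j ≤ μ i) ∧
        (∀ i : Fin n,
          lam i.succ - (n - ((i : ℕ) + 1)) ≤ μ i ∧
            μ i ≤ lam i.castSucc - (n - (i : ℕ))) ∧
        (∀ i : Fin n, μ i ≤ ν i - (n - 1 - (i : ℕ)) ∧
            ν i - (n - 1 - (i : ℕ)) ≤ μ i + 1)} =
      if ∀ i : Fin n, lam i.succ ≤ ν i ∧ ν i ≤ lam i.castSucc then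
        2 ^ (Finset.univ.filter
          (fun i : Fin n => lam i.succ < ν i ∧ ν i < lam i.castSucc)).card
      else 0 := by
  -- The predicate is, definitionally, `Antitone μ ∧ Interlaces μ κ ∧ IsVerticalStrip μ ρ`.
  refine (Nat.card_congr (Equiv.subtypeEquivRight
    (antitone_and_interlaces_and_isVerticalStrip_iff (κ := subStaircase lam)
      (ρ := subStaircase ν)))).trans ?_
  rw [Nat.card_eq_finsetCard, Fintype.card_piFinset]
  exact (Fintype.prod_congr _ _ (card_Icc_subStaircase_window hlam hν)).trans
    (Fintype.prod_ite_ite_zero_one _ _ _)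

/-- Combinatorial multiplicity count in the twisted branching rule, with
`k = n + 1 ≥ 2`: for a strict partition `λ` with `k` parts and a strict partition
`ν` with `k - 1` parts, the number of partitions `μ` with `μ ◁ λ - δ_k` such that
the skew shape `(ν - δ_{k-1})/μ` is a vertical strip (`μ_i ≤ (ν-δ_{k-1})_i ≤ μ_i + 1`)
equals `2^{∇(λ,ν)}` if `ν ◁ λ`, and `0` otherwise; here
`∇(λ,ν) = #{i : λ_i > ν_i > λ_{i+1}}`, `δ_k = (k-1, …, 1, 0)` and
`δ_{k-1} = (k-2, …, 1, 0)`. -/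
theorem twisted_branching_multiplicity_count (n : ℕ) (hn : 1 ≤ n)
    (lam : Fin (n + 1) → ℕ)
    (hlam : ∀ i j : Fin (n + 1), i < j → lam j < lam i)
    (ν : Fin n → ℕ) (hν : ∀ i j : Fin n, i < j → ν j < ν i) :
    Nat.card {μ : Fin n → ℕ //
        (∀ i j : Fin n, i ≤ j → μ j ≤ μ i) ∧
        (∀ i : Fin n,
          lam i.succ - (n - ((i : ℕ) + 1)) ≤ μ i ∧
            μ i ≤ lam i.castSucc - (n - (i : ℕ))) ∧
        (∀ i : Fin n, μ i ≤ ν i - (n - 1 - (i : ℕ)) ∧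
            ν i - (n - 1 - (i : ℕ)) ≤ μ i + 1)} =
      if ∀ i : Fin n, lam i.succ ≤ ν i ∧ ν i ≤ lam i.castSucc then
        2 ^ (Finset.univ.filter
          (fun i : Fin n => lam i.succ < ν i ∧ ν i < lam i.castSucc)).card
      else 0 :=
  twisted_branching_multiplicity_count_general n lam hlam ν hν
end

section
/- Explicit q-analogue of the Kostant partition function for A_2: let α_1, α_2 be the simple roots of A_2, so the positive roots are α_1, α_2, α_1+α_2, and let μ = a_1α_1 + a_2α_2 with a_1, a_2 nonnegative integers. Then K_q(μ) = (min(a_1,a_2) − 1)q^3 + 2q^2 if a_1 > 0, a_2 > 0 and a_1 ≠ a_2; K_q(μ) = (a − 1)q^3 + q^2 + q if a_1 = a_2 = a > 0; K_q(μ) = q if exactly one of a_1, a_2 is zero and the other is positive; and K_q(μ) = 1 if a_1 = a_2 = 0. -/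
abbrev ARoot (n : ℕ) := {p : Fin n × Fin n // p.1 ≤ p.2}

def aRootVec {n : ℕ} (p : ARoot n) : Fin n → ℤ :=
  fun t => if p.1.1 ≤ t ∧ t ≤ p.1.2 then 1 else 0

noncomputable def Kq (n : ℕ) (μ : Fin n → ℤ) : Polynomial ℤ :=
  ∑ᶠ m : {m : ARoot n → ℕ // ∀ t, (∑ α : ARoot n, (m α : ℤ) * aRootVec α t) = μ t},
    Polynomial.X ^ (Finset.univ.filter (fun α : ARoot n => m.1 α ≠ 0)).card

def r1 : ARoot 2 := ⟨(0,0), le_refl _⟩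
def r12 : ARoot 2 := ⟨(0,1), by decide⟩
def r2 : ARoot 2 := ⟨(1,1), le_refl _⟩

lemma univ_eq : (Finset.univ : Finset (ARoot 2)) = {r1, r12, r2} := by decide

lemma sum_aroot {M : Type*} [AddCommMonoid M] (f : ARoot 2 → M) :
    ∑ α : ARoot 2, f α = f r1 + f r12 + f r2 := by
  rw [univ_eq, Finset.sum_insert (by decide), Finset.sum_insert (by decide),
    Finset.sum_singleton, add_assoc]

@[simp] lemma av10 : aRootVec r1 0 = 1 := by decide
@[simp] lemma av11 : aRootVec r1 1 = 0 := by decide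
@[simp] lemma av120 : aRootVec r12 0 = 1 := by decide
@[simp] lemma av121 : aRootVec r12 1 = 1 := by decide
@[simp] lemma av20 : aRootVec r2 0 = 0 := by decide
@[simp] lemma av21 : aRootVec r2 1 = 1 := by decide

lemma constraint_iff (a1 a2 : ℕ) (m : ARoot 2 → ℕ) :
    (∀ t, (∑ α : ARoot 2, (m α : ℤ) * aRootVec α t) = ![(a1:ℤ), a2] t) ↔
      (m r1 + m r12 = a1 ∧ m r12 + m r2 = a2) := by
  have h0 : ∀ t, (∑ α : ARoot 2, (m α : ℤ) * aRootVec α t)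
      = (m r1 : ℤ) * aRootVec r1 t + m r12 * aRootVec r12 t + m r2 * aRootVec r2 t :=
    fun t => sum_aroot _
  constructor
  · intro h
    have h1 := h 0; have h2 := h 1
    rw [h0] at h1 h2
    simp only [av10, av11, av120, av121, av20, av21, mul_one, mul_zero,
      Matrix.cons_val_zero, Matrix.cons_val_one, Matrix.head_cons] at h1 h2
    constructor <;> omega
  · rintro ⟨h1, h2⟩ t
    rw [h0]
    fin_cases t <;>
      simp only [av10, av11, av120, av121, av20, av21, mul_one, mul_zero,
        Matrix.cons_val_zero, Matrix.cons_val_one, Matrix.head_cons, Fin.zero_eta,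
        Fin.mk_one] <;> omega

def Sol (a1 a2 : ℕ) :=
  {m : ARoot 2 → ℕ // ∀ t, (∑ α : ARoot 2, (m α : ℤ) * aRootVec α t) = ![(a1:ℤ), a2] t}

lemma aroot_cases : ∀ α : ARoot 2, α = r1 ∨ α = r12 ∨ α = r2 := by decide

def mkm (a1 a2 k : ℕ) : ARoot 2 → ℕ :=
  fun α => if α = r1 then a1 - k else if α = r12 then k else a2 - k

@[simp] lemma mkm_r1 (a1 a2 k : ℕ) : mkm a1 a2 k r1 = a1 - k := if_pos rfl
@[simp] lemma mkm_r12 (a1 a2 k : ℕ) : mkm a1 a2 k r12 = k := by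
  rw [mkm, if_neg (by decide), if_pos rfl]
@[simp] lemma mkm_r2 (a1 a2 k : ℕ) : mkm a1 a2 k r2 = a2 - k := by
  rw [mkm, if_neg (by decide), if_neg (by decide)]

def solEquiv (a1 a2 : ℕ) : Sol a1 a2 ≃ Fin (min a1 a2 + 1) where
  toFun m := ⟨m.1 r12, by
    have h := (constraint_iff a1 a2 m.1).1 m.2
    omega⟩
  invFun k := ⟨mkm a1 a2 k.1, by
    rw [constraint_iff]
    have hk := k.2
    simp only [mkm_r1, mkm_r12, mkm_r2]
    omega⟩
  left_inv m := by
    have h := (constraint_iff a1 a2 m.1).1 m.2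
    apply Subtype.ext
    funext α
    rcases aroot_cases α with rfl | rfl | rfl <;>
      simp only [mkm_r1, mkm_r12, mkm_r2] <;> omega
  right_inv k := by
    apply Fin.ext
    simp [mkm_r12]

lemma weight_eq (m : ARoot 2 → ℕ) :
    (Finset.univ.filter (fun α : ARoot 2 => m α ≠ 0)).card =
      (if m r1 ≠ 0 then 1 else 0) + (if m r12 ≠ 0 then 1 else 0) +
        (if m r2 ≠ 0 then 1 else 0) := by
  rw [univ_eq, Finset.filter_insert, Finset.filter_insert, Finset.filter_singleton]
  split_ifs <;> rfl

def w (a1 a2 k : ℕ) : ℕ :=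
  (if a1 - k ≠ 0 then 1 else 0) + (if k ≠ 0 then 1 else 0) + (if a2 - k ≠ 0 then 1 else 0)

lemma Kq_eq_sum (a1 a2 : ℕ) :
    Kq 2 ![(a1:ℤ), (a2:ℤ)] =
      ∑ k ∈ Finset.range (min a1 a2 + 1), Polynomial.X ^ w a1 a2 k := by
  haveI : Fintype (Sol a1 a2) := Fintype.ofEquiv _ (solEquiv a1 a2).symm
  show (∑ᶠ m : Sol a1 a2,
      Polynomial.X ^ (Finset.univ.filter (fun α : ARoot 2 => m.1 α ≠ 0)).card) = _
  rw [finsum_eq_sum_of_fintype]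
  rw [← Equiv.sum_comp (solEquiv a1 a2).symm
    (fun m : Sol a1 a2 =>
      Polynomial.X ^ (Finset.univ.filter (fun α : ARoot 2 => m.1 α ≠ 0)).card)]
  rw [← Fin.sum_univ_eq_sum_range]
  apply Finset.sum_congr rfl
  intro k _
  congr 1
  have hval : ((solEquiv a1 a2).symm k).1 = mkm a1 a2 k.1 := rfl
  rw [hval, weight_eq]
  simp only [mkm_r1, mkm_r12, mkm_r2, w]

lemma sum_peel (f : ℕ → Polynomial ℤ) (M : ℕ) :
    ∑ k ∈ Finset.range (M+2), f k
      = f 0 + (∑ k ∈ Finset.range M, f (k+1)) + f (M+1) := by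
  rw [Finset.sum_range_succ, Finset.sum_range_succ']
  ring

/-- Explicit formula for the `q`-analogue of the Kostant partition function for `A_2`,
evaluated at `μ = a_1 α_1 + a_2 α_2` with `a_1, a_2 ∈ ℕ`. -/
theorem Kq_A2_explicit (a1 a2 : ℕ) :
    (0 < a1 → 0 < a2 → a1 ≠ a2 →
      Kq 2 ![(a1 : ℤ), (a2 : ℤ)] =
        Polynomial.C ((min a1 a2 : ℤ) - 1) * Polynomial.X ^ 3 +
          2 * Polynomial.X ^ 2) ∧
    (0 < a1 → a1 = a2 →
      Kq 2 ![(a1 : ℤ), (a2 : ℤ)] =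
        Polynomial.C ((a1 : ℤ) - 1) * Polynomial.X ^ 3 +
          Polynomial.X ^ 2 + Polynomial.X) ∧
    ((a1 = 0 ∧ 0 < a2) ∨ (0 < a1 ∧ a2 = 0) →
      Kq 2 ![(a1 : ℤ), (a2 : ℤ)] = Polynomial.X) ∧
    (a1 = 0 → a2 = 0 → Kq 2 ![(a1 : ℤ), (a2 : ℤ)] = 1) := by
  refine ⟨?_, ?_, ?_, ?_⟩
  · intro h1 h2 hne
    obtain ⟨M, hM⟩ : ∃ M, min a1 a2 = M + 1 := ⟨min a1 a2 - 1, by omega⟩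
    rw [Kq_eq_sum, hM, sum_peel]
    have h0 : w a1 a2 0 = 2 := by unfold w; split_ifs <;> omega
    have hN : w a1 a2 (M+1) = 2 := by unfold w; split_ifs <;> omega
    have hmid : ∑ k ∈ Finset.range M, Polynomial.X ^ w a1 a2 (k+1)
        = M • (Polynomial.X : Polynomial ℤ) ^ 3 := by
      have step : ∑ k ∈ Finset.range M, Polynomial.X ^ w a1 a2 (k+1)
          = ∑ _k ∈ Finset.range M, (Polynomial.X : Polynomial ℤ) ^ 3 :=
        Finset.sum_congr rfl (fun k hk => by
          rw [Finset.mem_range] at hk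
          have h3 : w a1 a2 (k+1) = 3 := by unfold w; split_ifs <;> omega
          rw [h3])
      rw [step, Finset.sum_const, Finset.card_range]
    rw [h0, hN, hmid]
    have hC : (min (a1:ℤ) a2) - 1 = (M:ℤ) := by
      have : ((min a1 a2 : ℕ) : ℤ) = ((M:ℤ) + 1) := by rw [hM]; push_cast; ring
      push_cast at this
      omega
    rw [hC, Polynomial.C_eq_natCast, nsmul_eq_mul]
    ring
  · intro h1 h2
    subst h2
    obtain ⟨M, hM⟩ : ∃ M, min a1 a1 = M + 1 := ⟨a1 - 1, by omega⟩
    rw [Kq_eq_sum, hM, sum_peel]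
    have h0 : w a1 a1 0 = 2 := by unfold w; split_ifs <;> omega
    have hN : w a1 a1 (M+1) = 1 := by unfold w; split_ifs <;> omega
    have hmid : ∑ k ∈ Finset.range M, Polynomial.X ^ w a1 a1 (k+1)
        = M • (Polynomial.X : Polynomial ℤ) ^ 3 := by
      have step : ∑ k ∈ Finset.range M, Polynomial.X ^ w a1 a1 (k+1)
          = ∑ _k ∈ Finset.range M, (Polynomial.X : Polynomial ℤ) ^ 3 :=
        Finset.sum_congr rfl (fun k hk => by
          rw [Finset.mem_range] at hk
          have h3 : w a1 a1 (k+1) = 3 := by unfold w; split_ifs <;> omega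
          rw [h3])
      rw [step, Finset.sum_const, Finset.card_range]
    rw [h0, hN, hmid]
    have hC : (a1:ℤ) - 1 = (M:ℤ) := by omega
    rw [hC, Polynomial.C_eq_natCast, nsmul_eq_mul]
    ring
  · rintro (⟨rfl, h2⟩ | ⟨h1, rfl⟩)
    · rw [Kq_eq_sum]
      have hm : min 0 a2 = 0 := by omega
      rw [hm, Finset.sum_range_one]
      have hw : w 0 a2 0 = 1 := by unfold w; split_ifs <;> omega
      rw [hw, pow_one]
    · rw [Kq_eq_sum]
      have hm : min a1 0 = 0 := by omega
      rw [hm, Finset.sum_range_one]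
      have hw : w a1 0 0 = 1 := by unfold w; split_ifs <;> omega
      rw [hw, pow_one]
  · rintro rfl rfl
    rw [Kq_eq_sum]
    norm_num [w]
end
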